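/- For every iteration t ≥ 1 and every δ > 0, the potential function F decreases up to delayed terms: F(x^{t+1}, x^t) − F(x^t, x^{t−1}) ≤ (3L/2 − γ/2 + Lδτ)‖Δ^{(t)}‖² − (ρ/2)‖Δ^{(t−1)}‖² + (L/δ) Σ_{k=1}^{τ} ‖Δ^{(t−k)}‖². -/

import Mathlib

/-!
The update `x^{t+1}` minimizes `L₁ + (h + ρ/2 ‖· - xᵗ‖²) + ⟪e, · - xᵗ⟫`, which is
`(γ - L)`-strongly convex because an `L`-smooth function is `(-L)`-strongly convex; comparing its
minimum with its value at `xᵗ`, and adding the descent lemma for the average of the `L_j` and for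
`L₁` (in reverse), bounds the difference of potentials up to the delay error
`⟪avg ∇L_j(xᵗ) - ∇L₁(xᵗ) - e, Δᵗ⟫`. Each delayed gradient is within `L ∑_{k=1}^τ ‖Δ^{t-k}‖` of the
current one, and Young's inequality with weight `δ` splits the resulting product.
-/

open scoped RealInnerProductSpace
open Filter Topology Finset

section Convex

variable {E : Type*} [NormedAddCommGroup E] [NormedSpace ℝ E] {s : Set E} {m n : ℝ} {f g : E → ℝ}

lemma StrongConvexOn.add (hf : StrongConvexOn s m f) (hg : StrongConvexOn s n g) :
    StrongConvexOn s (m + n) (f + g) := by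
  have hmod : (fun r : ℝ ↦ (m + n) / 2 * r ^ 2)
      = (fun r ↦ m / 2 * r ^ 2) + fun r ↦ n / 2 * r ^ 2 := by
    ext r
    simp only [Pi.add_apply]
    ring
  unfold StrongConvexOn
  rw [hmod]
  exact UniformConvexOn.add hf hg

lemma StrongConvexOn.add_convexOn (hf : StrongConvexOn s m f) (hg : ConvexOn ℝ s g) :
    StrongConvexOn s m (f + g) := by
  simpa using hf.add (strongConvexOn_zero.2 hg)

lemma StrongConvexOn.add_mul_sq_norm_sub_le_of_isMinOn {x y : E} (hf : StrongConvexOn s m f)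
    (hx : x ∈ s) (hmin : IsMinOn f s x) (hy : y ∈ s) :
    f x + m / 2 * ‖y - x‖ ^ 2 ≤ f y := by
  set c := m / 2 * ‖y - x‖ ^ 2
  have hgap : ∀ a ∈ Set.Ioo (0 : ℝ) 1, f x + c - f y ≤ a * c := by
    intro a ha
    have hz : f (a • y + (1 - a) • x) ≤ a * f y + (1 - a) * f x - a * (1 - a) * c := by
      simpa only [smul_eq_mul] using hf.2 hy hx ha.1.le (sub_nonneg.2 ha.2.le) (add_sub_cancel a 1)
    have hmin_z : f x ≤ f (a • y + (1 - a) • x) :=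
      hmin (hf.1 hy hx ha.1.le (sub_nonneg.2 ha.2.le) (add_sub_cancel a 1))
    refine le_of_mul_le_mul_left ?_ ha.1
    linarith
  have hlim : Tendsto (fun a : ℝ ↦ a * c) (𝓝[>] 0) (𝓝 0) := by
    simpa using ((continuous_mul_const c).tendsto (0 : ℝ)).mono_left nhdsWithin_le_nhds
  have := ge_of_tendsto hlim (eventually_of_mem (Ioo_mem_nhdsGT zero_lt_one) hgap)
  linarith

end Convex

section Smooth

variable {E : Type*} [NormedAddCommGroup E] [InnerProductSpace ℝ E] [CompleteSpace E]
  {f : E → ℝ} {L : ℝ}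

lemma hasDerivAt_comp_add_smul (hf : Differentiable ℝ f) (a v : E) (s : ℝ) :
    HasDerivAt (fun r : ℝ ↦ f (a + r • v)) ⟪gradient f (a + s • v), v⟫ s := by
  have hline : HasDerivAt (fun r : ℝ ↦ a + r • v) v s := by
    simpa using ((hasDerivAt_id s).smul_const v).const_add a
  exact (hasGradientAt_iff_hasFDerivAt.1 (hf _).hasGradientAt).comp_hasDerivAt s hline

lemma abs_sub_sub_inner_gradient_le (hf : Differentiable ℝ f)
    (hlip : ∀ u v, ‖gradient f u - gradient f v‖ ≤ L * ‖u - v‖) (a b : E) :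
    |f b - f a - ⟪gradient f a, b - a⟫| ≤ L / 2 * ‖b - a‖ ^ 2 := by
  set v := b - a
  have hderiv (s : ℝ) : HasDerivAt (fun s : ℝ ↦ f (a + s • v) - f a - s * ⟪gradient f a, v⟫)
      (⟪gradient f (a + s • v), v⟫ - ⟪gradient f a, v⟫) s :=
    ((hasDerivAt_comp_add_smul hf a v s).sub_const (f a)).sub (hasDerivAt_mul_const _)
  have hB (s : ℝ) : HasDerivAt (fun s : ℝ ↦ L / 2 * ‖v‖ ^ 2 * s ^ 2) (L * ‖v‖ ^ 2 * s) s := by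
    refine ((hasDerivAt_pow 2 s).const_mul (L / 2 * ‖v‖ ^ 2)).congr_deriv ?_
    push_cast
    ring
  have hbound : ∀ s ∈ Set.Ico (0 : ℝ) 1,
      ‖⟪gradient f (a + s • v), v⟫ - ⟪gradient f a, v⟫‖ ≤ L * ‖v‖ ^ 2 * s := fun s hs ↦
    calc ‖⟪gradient f (a + s • v), v⟫ - ⟪gradient f a, v⟫‖
        = |⟪gradient f (a + s • v) - gradient f a, v⟫| := by rw [inner_sub_left, Real.norm_eq_abs]
      _ ≤ ‖gradient f (a + s • v) - gradient f a‖ * ‖v‖ := abs_real_inner_le_norm _ _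
      _ ≤ L * ‖s • v‖ * ‖v‖ := by
        gcongr
        simpa using hlip (a + s • v) a
      _ = L * ‖v‖ ^ 2 * s := by
        rw [norm_smul, Real.norm_of_nonneg hs.1]
        ring
  have := image_norm_le_of_norm_deriv_right_le_deriv_boundary
    (fun s _ ↦ (hderiv s).continuousAt.continuousWithinAt) (fun s _ ↦ (hderiv s).hasDerivWithinAt)
    (by simp) hB hbound (Set.right_mem_Icc.2 zero_le_one)
  simpa [v] using this

lemma strongConvexOn_neg_of_lipschitz_gradient (hf : Differentiable ℝ f)
    (hlip : ∀ u v, ‖gradient f u - gradient f v‖ ≤ L * ‖u - v‖) :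
    StrongConvexOn Set.univ (-L) f := by
  refine ⟨convex_univ, fun a _ b _ α β hα hβ hαβ ↦ ?_⟩
  obtain rfl : β = 1 - α := by linarith
  set y := α • a + (1 - α) • b
  have hay : a - y = (1 - α) • (a - b) := by module
  have hby : b - y = (-α) • (a - b) := by module
  have ha := (abs_le.1 (abs_sub_sub_inner_gradient_le hf hlip y a)).1
  have hb := (abs_le.1 (abs_sub_sub_inner_gradient_le hf hlip y b)).1
  rw [hay, inner_smul_right, norm_smul, mul_pow, Real.norm_eq_abs, sq_abs] at ha
  rw [hby, inner_smul_right, norm_smul, mul_pow, Real.norm_eq_abs, sq_abs] at hb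
  simp only [smul_eq_mul]
  linarith [mul_le_mul_of_nonneg_left ha hα, mul_le_mul_of_nonneg_left hb hβ]

lemma inv_card_mul_sum_le_of_lipschitz_gradient {ι : Type*} [Fintype ι] [Nonempty ι]
    {f : ι → E → ℝ} (hf : ∀ i, Differentiable ℝ (f i))
    (hlip : ∀ i u v, ‖gradient (f i) u - gradient (f i) v‖ ≤ L * ‖u - v‖) (a b : E) :
    (Fintype.card ι : ℝ)⁻¹ * ∑ i, f i b ≤ (Fintype.card ι : ℝ)⁻¹ * ∑ i, f i a
      + ⟪(Fintype.card ι : ℝ)⁻¹ • ∑ i, gradient (f i) a, b - a⟫ + L / 2 * ‖b - a‖ ^ 2 := by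
  have hsum : ∑ i, f i b ≤ ∑ i, (f i a + ⟪gradient (f i) a, b - a⟫ + L / 2 * ‖b - a‖ ^ 2) :=
    sum_le_sum fun i _ ↦ by
      linarith [(abs_le.1 (abs_sub_sub_inner_gradient_le (hf i) (hlip i) a b)).2]
  rw [sum_add_distrib, sum_add_distrib, sum_const, card_univ, nsmul_eq_mul] at hsum
  have hcard : (0 : ℝ) < Fintype.card ι := by exact_mod_cast Fintype.card_pos
  rw [real_inner_smul_left, sum_inner]
  calc (Fintype.card ι : ℝ)⁻¹ * ∑ i, f i b
      ≤ (Fintype.card ι : ℝ)⁻¹ * (∑ i, f i a + ∑ i, ⟪gradient (f i) a, b - a⟫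
          + Fintype.card ι * (L / 2 * ‖b - a‖ ^ 2)) := by gcongr
    _ = _ := by field_simp

lemma add_add_inner_add_mul_sq_norm_sub_le {g : E → ℝ} {γ : ℝ} (hf : Differentiable ℝ f)
    (hlip : ∀ u v, ‖gradient f u - gradient f v‖ ≤ L * ‖u - v‖) (hg : StrongConvexOn Set.univ γ g)
    {e z x' : E} (hmin : ∀ y, f x' + g x' + ⟪e, x' - z⟫ ≤ f y + g y + ⟪e, y - z⟫) (y : E) :
    f x' + g x' + ⟪e, x' - z⟫ + (γ - L) / 2 * ‖y - x'‖ ^ 2 ≤ f y + g y + ⟪e, y - z⟫ := by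
  have hlin : ConvexOn ℝ Set.univ fun y ↦ ⟪e, y - z⟫ := by
    refine ⟨convex_univ, fun a _ b _ α β _ _ hαβ ↦ le_of_eq ?_⟩
    simp only [smul_eq_mul, inner_sub_right, inner_add_right, real_inner_smul_right]
    linear_combination ⟪e, z⟫ * hαβ
  have hconv := ((strongConvexOn_neg_of_lipschitz_gradient hf hlip).add hg).add_convexOn hlin
  have := hconv.add_mul_sq_norm_sub_le_of_isMinOn (Set.mem_univ x') (fun y _ ↦ hmin y)
    (Set.mem_univ y)
  simp only [Pi.add_apply] at this
  linarith

end Smooth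

lemma norm_sub_le_sum_norm_of_delay {E : Type*} [NormedAddCommGroup E] (x : ℕ → E) (Δ : ℤ → E)
    (hΔ : ∀ s : ℤ, 0 ≤ s → Δ s = x (s.toNat + 1) - x s.toNat) {s t τ : ℕ} (hs : t - τ ≤ s)
    (hst : s ≤ t) : ‖x t - x s‖ ≤ ∑ k ∈ Icc 1 τ, ‖Δ ((t : ℤ) - (k : ℤ))‖ := by
  calc ‖x t - x s‖ = dist (x s) (x t) := by rw [dist_comm, dist_eq_norm]
    _ ≤ ∑ i ∈ Ico s t, dist (x i) (x (i + 1)) := dist_le_Ico_sum_dist x hst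
    _ = ∑ k ∈ Icc 1 (t - s), ‖Δ ((t : ℤ) - (k : ℤ))‖ := by
      refine sum_nbij' (fun i ↦ t - i) (fun k ↦ t - k) ?_ ?_ ?_ ?_ ?_
      · intro i hi; simp only [mem_Ico, mem_Icc] at hi ⊢; omega
      · intro k hk; simp only [mem_Ico, mem_Icc] at hk ⊢; omega
      · intro i hi; simp only [mem_Ico] at hi; omega
      · intro k hk; simp only [mem_Icc] at hk; omega
      · intro i hi
        simp only [mem_Ico] at hi
        rw [show (t : ℤ) - ((t - i : ℕ) : ℤ) = i by omega, hΔ i (Int.natCast_nonneg i),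
          dist_comm, dist_eq_norm, Int.toNat_natCast]
    _ ≤ ∑ k ∈ Icc 1 τ, ‖Δ ((t : ℤ) - (k : ℤ))‖ :=
      sum_le_sum_of_subset_of_nonneg (Icc_subset_Icc_right (by omega)) fun _ _ _ ↦ norm_nonneg _

lemma two_mul_sum_mul_le {ι : Type*} (s : Finset ι) (a : ι → ℝ) (b : ℝ) {δ : ℝ} (hδ : 0 < δ) :
    2 * (∑ i ∈ s, a i) * b ≤ δ * s.card * b ^ 2 + δ⁻¹ * ∑ i ∈ s, a i ^ 2 := by
  have hterm (i : ι) : 2 * a i * b ≤ δ * b ^ 2 + δ⁻¹ * a i ^ 2 := by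
    have := mul_nonneg (inv_nonneg.2 hδ.le) (sq_nonneg (δ * b - a i))
    rw [show δ⁻¹ * (δ * b - a i) ^ 2 = δ * b ^ 2 - 2 * a i * b + δ⁻¹ * a i ^ 2 by
      field_simp; ring] at this
    linarith
  calc 2 * (∑ i ∈ s, a i) * b = ∑ i ∈ s, 2 * a i * b := by rw [mul_sum, sum_mul]
    _ ≤ ∑ i ∈ s, (δ * b ^ 2 + δ⁻¹ * a i ^ 2) := sum_le_sum fun i _ ↦ hterm i
    _ = δ * s.card * b ^ 2 + δ⁻¹ * ∑ i ∈ s, a i ^ 2 := by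
      rw [sum_add_distrib, sum_const, nsmul_eq_mul, mul_sum]; ring

lemma norm_inv_card_smul_sum_sub_sub_le {E ι : Type*} [NormedAddCommGroup E] [NormedSpace ℝ E]
    [Fintype ι] (u v : ι → E) (i₀ : ι) {c : ℝ} (h : ∀ i, ‖u i - v i‖ ≤ c) :
    ‖((Fintype.card ι : ℝ)⁻¹ • ∑ i, u i - u i₀) - ((Fintype.card ι : ℝ)⁻¹ • ∑ i, v i - v i₀)‖
      ≤ 2 * c := by
  have hcard : (0 : ℝ) < Fintype.card ι := by exact_mod_cast Fintype.card_pos_iff.2 ⟨i₀⟩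
  have havg : ‖(Fintype.card ι : ℝ)⁻¹ • ∑ i, (u i - v i)‖ ≤ c := by
    rw [norm_smul, norm_inv, Real.norm_natCast, inv_mul_le_iff₀ hcard]
    calc ‖∑ i, (u i - v i)‖ ≤ ∑ i, ‖u i - v i‖ := norm_sum_le _ _
      _ ≤ ∑ _i : ι, c := sum_le_sum fun i _ ↦ h i
      _ = Fintype.card ι * c := by rw [sum_const, card_univ, nsmul_eq_mul]
  calc _ = ‖(Fintype.card ι : ℝ)⁻¹ • ∑ i, (u i - v i) - (u i₀ - v i₀)‖ := by
        rw [sum_sub_distrib, smul_sub]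
        congr 1
        abel
    _ ≤ c + c := (norm_sub_le _ _).trans (add_le_add havg (h i₀))
    _ = 2 * c := by ring

theorem stmt_3_general
    {p m τ : ℕ} (hm : 0 < m)
    {L ρ γ : ℝ}
    (hL : 0 < L)
    (Lf : Fin m → EuclideanSpace ℝ (Fin p) → ℝ)
    (hdiff : ∀ j, Differentiable ℝ (Lf j))
    (hlip : ∀ j (u v : EuclideanSpace ℝ (Fin p)), ‖gradient (Lf j) u - gradient (Lf j) v‖ ≤ L * ‖u - v‖)
    (h : EuclideanSpace ℝ (Fin p) → ℝ)
    (hstrong : ∀ z : EuclideanSpace ℝ (Fin p), StrongConvexOn Set.univ γ (fun y => h y + ρ / 2 * ‖y - z‖ ^ 2))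
    (tj : ℕ → Fin m → ℕ)
    (htj : ∀ t j, t - τ ≤ tj t j ∧ tj t j ≤ t)
    (x : ℕ → EuclideanSpace ℝ (Fin p))
    (hupdate : ∀ t, ∀ y : EuclideanSpace ℝ (Fin p),
      Lf ⟨0, hm⟩ (x (t + 1)) + h (x (t + 1)) + ρ / 2 * ‖x (t + 1) - x t‖ ^ 2 +
          ⟪((m : ℝ)⁻¹ • ∑ j, gradient (Lf j) (x (tj t j))) - gradient (Lf ⟨0, hm⟩) (x (tj t ⟨0, hm⟩)), x (t + 1) - x t⟫ ≤
        Lf ⟨0, hm⟩ y + h y + ρ / 2 * ‖y - x t‖ ^ 2 +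
          ⟪((m : ℝ)⁻¹ • ∑ j, gradient (Lf j) (x (tj t j))) - gradient (Lf ⟨0, hm⟩) (x (tj t ⟨0, hm⟩)), y - x t⟫)
    (Δ : ℤ → EuclideanSpace ℝ (Fin p))
    (hΔ : ∀ s : ℤ, 0 ≤ s → Δ s = x (s.toNat + 1) - x s.toNat)
    (t : ℕ) (ht : 1 ≤ t) (δ : ℝ) (hδ : 0 < δ)
    :
    (((m : ℝ)⁻¹ * ∑ j, Lf j (x (t + 1))) + ρ / 2 * ‖x (t + 1) - x t‖ ^ 2 + h (x (t + 1))) - (((m : ℝ)⁻¹ * ∑ j, Lf j (x t)) + ρ / 2 * ‖x t - x (t - 1)‖ ^ 2 + h (x t)) ≤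
      (3 * L / 2 - γ / 2 + L * δ * τ) * ‖Δ (t : ℤ)‖ ^ 2 - ρ / 2 * ‖Δ ((t : ℤ) - 1)‖ ^ 2 +
        L / δ * ∑ k ∈ Finset.Icc 1 τ, ‖Δ ((t : ℤ) - (k : ℤ))‖ ^ 2 := by
  set j₀ : Fin m := ⟨0, hm⟩
  have : Nonempty (Fin m) := ⟨j₀⟩
  set e := ((m : ℝ)⁻¹ • ∑ j, gradient (Lf j) (x (tj t j))) - gradient (Lf j₀) (x (tj t j₀))
  have hΔt : Δ t = x (t + 1) - x t := by simpa using hΔ t (Int.natCast_nonneg t)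
  have hΔt' : Δ ((t : ℤ) - 1) = x t - x (t - 1) := by
    rw [hΔ _ (by omega), show ((t : ℤ) - 1).toNat = t - 1 by omega, Nat.sub_add_cancel ht]
  have hprox := add_add_inner_add_mul_sq_norm_sub_le (hdiff j₀) (hlip j₀) (hstrong (x t))
    (e := e) (z := x t) (x' := x (t + 1)) (fun y ↦ by linarith [hupdate t y]) (x t)
  simp only [e, sub_self, norm_zero, inner_zero_right, inner_sub_left, norm_sub_rev (x t)] at hprox
  have havg := inv_card_mul_sum_le_of_lipschitz_gradient hdiff hlip (x t) (x (t + 1))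
  have hrev := (abs_le.1 (abs_sub_sub_inner_gradient_le (hdiff j₀) (hlip j₀) (x t) (x (t + 1)))).1
  have hlag (j : Fin m) : ‖gradient (Lf j) (x t) - gradient (Lf j) (x (tj t j))‖
      ≤ L * ∑ k ∈ Finset.Icc 1 τ, ‖Δ ((t : ℤ) - (k : ℤ))‖ :=
    (hlip j _ _).trans <| mul_le_mul_of_nonneg_left
      (norm_sub_le_sum_norm_of_delay x Δ hΔ (htj t j).1 (htj t j).2) hL.le
  have herr := (real_inner_le_norm _ (x (t + 1) - x t)).trans <| mul_le_mul_of_nonneg_right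
    (norm_inv_card_smul_sum_sub_sub_le _ _ j₀ hlag) (norm_nonneg _)
  have hyoung := mul_le_mul_of_nonneg_left
    (two_mul_sum_mul_le (Finset.Icc 1 τ) (fun k ↦ ‖Δ ((t : ℤ) - (k : ℤ))‖) ‖x (t + 1) - x t‖ hδ)
    hL.le
  simp only [Fintype.card_fin, inner_sub_left] at havg herr
  simp only [Nat.card_Icc, add_tsub_cancel_right] at hyoung
  rw [hΔt, hΔt', div_eq_mul_inv L δ]
  linarith

theorem stmt_3
    {p m τ : ℕ} (hp : 1 ≤ p) (hm : 0 < m)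
    {L ρ γ : ℝ}
    (hL : 0 < L) (hρ : 0 < ρ) (hγ : 0 < γ)
    (Lf : Fin m → EuclideanSpace ℝ (Fin p) → ℝ)
    (hdiff : ∀ j, Differentiable ℝ (Lf j))
    (hlip : ∀ j (u v : EuclideanSpace ℝ (Fin p)), ‖gradient (Lf j) u - gradient (Lf j) v‖ ≤ L * ‖u - v‖)
    (h : EuclideanSpace ℝ (Fin p) → ℝ)
    (hconv : ConvexOn ℝ Set.univ h)
    (hstrong : ∀ z : EuclideanSpace ℝ (Fin p), StrongConvexOn Set.univ γ (fun y => h y + ρ / 2 * ‖y - z‖ ^ 2))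
    (tj : ℕ → Fin m → ℕ)
    (htj : ∀ t j, t - τ ≤ tj t j ∧ tj t j ≤ t)
    (x : ℕ → EuclideanSpace ℝ (Fin p))
    (hupdate : ∀ t, ∀ y : EuclideanSpace ℝ (Fin p),
      Lf ⟨0, hm⟩ (x (t + 1)) + h (x (t + 1)) + ρ / 2 * ‖x (t + 1) - x t‖ ^ 2 +
          ⟪((m : ℝ)⁻¹ • ∑ j, gradient (Lf j) (x (tj t j))) - gradient (Lf ⟨0, hm⟩) (x (tj t ⟨0, hm⟩)), x (t + 1) - x t⟫ ≤
        Lf ⟨0, hm⟩ y + h y + ρ / 2 * ‖y - x t‖ ^ 2 +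
          ⟪((m : ℝ)⁻¹ • ∑ j, gradient (Lf j) (x (tj t j))) - gradient (Lf ⟨0, hm⟩) (x (tj t ⟨0, hm⟩)), y - x t⟫)
    (Δ : ℤ → EuclideanSpace ℝ (Fin p))
    (hΔ : ∀ s : ℤ, 0 ≤ s → Δ s = x (s.toNat + 1) - x s.toNat)
    (hΔneg : ∀ s : ℤ, s < 0 → Δ s = 0)
    (t : ℕ) (ht : 1 ≤ t) (δ : ℝ) (hδ : 0 < δ)
    :
    (((m : ℝ)⁻¹ * ∑ j, Lf j (x (t + 1))) + ρ / 2 * ‖x (t + 1) - x t‖ ^ 2 + h (x (t + 1))) - (((m : ℝ)⁻¹ * ∑ j, Lf j (x t)) + ρ / 2 * ‖x t - x (t - 1)‖ ^ 2 + h (x t)) ≤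
      (3 * L / 2 - γ / 2 + L * δ * τ) * ‖Δ (t : ℤ)‖ ^ 2 - ρ / 2 * ‖Δ ((t : ℤ) - 1)‖ ^ 2 +
        L / δ * ∑ k ∈ Finset.Icc 1 τ, ‖Δ ((t : ℤ) - (k : ℤ))‖ ^ 2 :=
  stmt_3_general hm hL Lf hdiff hlip h hstrong tj htj x hupdate Δ hΔ t ht δ hδ
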